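/- arXiv:0912.3852 — 4 statements merged into one kernel-verified Lean document; each statement's English description precedes it below -/
import Mathlib

section
/- Subject to the constraints P_1 ≤ P_2 ≤ ... ≤ P_n ≤ 2·P_1 with P_i > 0, the function U(P) = Σ_{i=1}^{n-1} (P_{i+1}/P_i) + 2·P_1/P_n − n attains its minimum value n·(2^{1/n} − 1), achieved when P_{i+1}/P_i = 2^{1/n} for all i and P_n/P_1 = 2^{(n-1)/n}. -/
open Finset

private lemma telescope_prod (P : ℕ → ℝ) : ∀ m : ℕ, (∀ i ≤ m, P i ≠ 0) →
    ∏ i ∈ range m, P (i + 1) / P i = P m / P 0 := by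
  intro m
  induction m with
  | zero => intro h; simp [div_self (h 0 le_rfl)]
  | succ k ih =>
      intro h
      rw [prod_range_succ, ih (fun i hi => h i (hi.trans (Nat.le_succ k)))]
      field_simp
      rw [mul_comm (P k), mul_comm (P k) (P 0), mul_div_mul_right _ _ (h k (Nat.le_succ k))]

/-- The optimization underlying the Liu–Layland bound: subject to
`P 0 ≤ ⋯ ≤ P (n-1) ≤ 2 P 0`, the function
`U(P) = Σ_{i<n-1} P_{i+1}/P_i + 2 P_0/P_{n-1} − n` has minimum `n (2^{1/n} − 1)`,
achieved when all ratios `P_{i+1}/P_i = 2^{1/n}` and `P_{n-1}/P_0 = 2^{(n-1)/n}`. -/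
theorem liu_layland_optimization (n : ℕ) (hn : 1 ≤ n) :
    (∀ P : ℕ → ℝ, (∀ i < n, 0 < P i) → (∀ i, i + 1 < n → P i ≤ P (i + 1)) →
      P (n - 1) ≤ 2 * P 0 →
      (n : ℝ) * ((2 : ℝ) ^ ((n : ℝ)⁻¹) - 1) ≤
        (∑ i ∈ Finset.range (n - 1), P (i + 1) / P i) + 2 * P 0 / P (n - 1) - n) ∧
    (∃ P : ℕ → ℝ, (∀ i < n, 0 < P i) ∧ (∀ i, i + 1 < n → P i ≤ P (i + 1)) ∧
      P (n - 1) ≤ 2 * P 0 ∧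
      (∀ i, i + 1 < n → P (i + 1) / P i = (2 : ℝ) ^ ((n : ℝ)⁻¹)) ∧
      P (n - 1) / P 0 = (2 : ℝ) ^ (((n : ℝ) - 1) / (n : ℝ)) ∧
      (∑ i ∈ Finset.range (n - 1), P (i + 1) / P i) + 2 * P 0 / P (n - 1) - n
        = (n : ℝ) * ((2 : ℝ) ^ ((n : ℝ)⁻¹) - 1)) := by
  have hn0 : (0:ℝ) < (n:ℝ) := by exact_mod_cast hn
  have hnR : (n:ℝ) ≠ 0 := ne_of_gt hn0
  constructor
  · intro P hpos hmono hlast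
    set z : ℕ → ℝ := fun i => if i < n - 1 then P (i + 1) / P i else 2 * P 0 / P (n - 1) with hz
    have hzpos : ∀ i ∈ range n, 0 < z i := by
      intro i hi
      simp only [mem_range] at hi
      simp only [hz]
      split_ifs with h
      · exact div_pos (hpos _ (by omega)) (hpos _ (by omega))
      · exact div_pos (by linarith [hpos 0 (by omega)]) (hpos _ (by omega))
    -- product of z over range n is 2
    have hne : ∀ i ≤ n - 1, P i ≠ 0 := fun i hi => ne_of_gt (hpos i (by omega))
    have htel : ∏ i ∈ range (n - 1), P (i + 1) / P i = P (n - 1) / P 0 := by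
      apply telescope_prod
      intro i hi; exact hne i hi
    have hprod : ∏ i ∈ range n, z i = 2 := by
      have hsplit : range n = range (n - 1) ∪ {n - 1} := by
        ext i; simp [mem_range, mem_union]; omega
      rw [hsplit, prod_union (by simp [mem_range])]
      have h1 : ∏ i ∈ range (n - 1), z i = ∏ i ∈ range (n - 1), P (i + 1) / P i := by
        apply prod_congr rfl
        intro i hi; simp only [mem_range] at hi; simp [hz, hi]
      rw [h1, htel]
      simp only [prod_singleton, hz, if_neg (lt_irrefl (n - 1))]
      have h0 : P 0 ≠ 0 := hne 0 (by omega)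
      have h1 : P (n - 1) ≠ 0 := hne (n - 1) le_rfl
      field_simp
    have hamgm := Real.geom_mean_le_arith_mean_weighted (range n)
      (fun _ => (n:ℝ)⁻¹) z (fun i _ => by positivity)
      (by simp [mul_inv_cancel₀ hnR]) (fun i hi => (hzpos i hi).le)
    have hlhs : ∏ i ∈ range n, z i ^ ((n:ℝ)⁻¹) = (2:ℝ) ^ ((n:ℝ)⁻¹) := by
      rw [Real.finset_prod_rpow _ _ (fun i hi => (hzpos i hi).le), hprod]
    have hrhs : ∑ i ∈ range n, (n:ℝ)⁻¹ * z i = (n:ℝ)⁻¹ * ∑ i ∈ range n, z i := by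
      rw [mul_sum]
    rw [hlhs, hrhs] at hamgm
    have hsum : ∑ i ∈ range n, z i
        = (∑ i ∈ range (n - 1), P (i + 1) / P i) + 2 * P 0 / P (n - 1) := by
      have hsplit : range n = range (n - 1) ∪ {n - 1} := by
        ext i; simp [mem_range, mem_union]; omega
      rw [hsplit, sum_union (by simp [mem_range])]
      congr 1
      · apply sum_congr rfl
        intro i hi; simp only [mem_range] at hi; simp [hz, hi]
      · simp [hz]
    have : (n:ℝ) * (2:ℝ) ^ ((n:ℝ)⁻¹) ≤ ∑ i ∈ range n, z i := by
      rw [mul_comm] at hamgm ⊢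
      calc (2:ℝ) ^ ((n:ℝ)⁻¹) * (n:ℝ) ≤ (∑ i ∈ range n, z i) * (n:ℝ)⁻¹ * (n:ℝ) := by
            apply mul_le_mul_of_nonneg_right _ hn0.le
            linarith [hamgm]
        _ = ∑ i ∈ range n, z i := by field_simp
    rw [hsum] at this
    nlinarith [this]
  · have hcast : ((n - 1:ℕ):ℝ) = (n:ℝ) - 1 := by
      have := Nat.cast_sub hn (R := ℝ); simpa using this
    have hr : ∀ i : ℕ, (2:ℝ) ^ (((i:ℕ)+1:ℝ)/(n:ℝ)) / (2:ℝ) ^ ((i:ℝ)/(n:ℝ))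
        = (2:ℝ) ^ ((n:ℝ)⁻¹) := by
      intro i
      rw [← Real.rpow_sub two_pos]
      congr 1
      field_simp
      ring
    have hP0 : (2:ℝ) ^ ((0:ℝ)/(n:ℝ)) = 1 := by norm_num
    have hPn : (2:ℝ) ^ ((((n-1:ℕ)):ℝ)/(n:ℝ)) = (2:ℝ) ^ (((n:ℝ) - 1)/(n:ℝ)) := by
      rw [hcast]
    refine ⟨fun i => (2:ℝ) ^ ((i:ℝ) / (n:ℝ)), ?_, ?_, ?_, ?_, ?_, ?_⟩
    · intro i _; positivity
    · intro i _
      apply Real.rpow_le_rpow_of_exponent_le one_le_two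
      gcongr
      exact_mod_cast Nat.le_succ i
    · show (2:ℝ) ^ ((((n-1:ℕ)):ℝ)/(n:ℝ)) ≤ 2 * (2:ℝ) ^ (((0:ℕ):ℝ)/(n:ℝ))
      norm_num
      rw [hPn]
      calc (2:ℝ) ^ (((n:ℝ) - 1) / (n:ℝ)) ≤ (2:ℝ) ^ (1:ℝ) := by
            apply Real.rpow_le_rpow_of_exponent_le one_le_two
            rw [div_le_one hn0]; linarith
        _ = 2 := by rw [Real.rpow_one]
    · intro i _
      show (2:ℝ) ^ ((((i+1:ℕ)):ℝ)/(n:ℝ)) / (2:ℝ) ^ (((i:ℕ):ℝ)/(n:ℝ)) = _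
      push_cast
      exact hr i
    · show (2:ℝ) ^ ((((n-1:ℕ)):ℝ)/(n:ℝ)) / (2:ℝ) ^ (((0:ℕ):ℝ)/(n:ℝ)) = _
      norm_num
      rw [hPn]
    · have hsum : ∑ i ∈ range (n - 1), (2:ℝ) ^ (((i:ℕ)+1:ℝ)/(n:ℝ)) / (2:ℝ) ^ ((i:ℝ)/(n:ℝ))
          = ((n:ℝ) - 1) * (2:ℝ) ^ ((n:ℝ)⁻¹) := by
        rw [sum_congr rfl (fun i _ => hr i), sum_const, card_range, nsmul_eq_mul, hcast]
      have hlastval : 2 * (2:ℝ) ^ ((0:ℝ)/(n:ℝ)) / (2:ℝ) ^ (((n:ℝ) - 1)/(n:ℝ))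
          = (2:ℝ) ^ ((n:ℝ)⁻¹) := by
        rw [zero_div, Real.rpow_zero, mul_one]
        have h2 : (2:ℝ) / (2:ℝ) ^ (((n:ℝ) - 1)/(n:ℝ))
            = (2:ℝ) ^ ((1:ℝ) - ((n:ℝ) - 1)/(n:ℝ)) := by
          rw [Real.rpow_sub two_pos, Real.rpow_one]
        rw [h2]
        congr 1
        field_simp
        ring
      have key : ∑ i ∈ range (n - 1),
            ((2:ℝ) ^ ((((i+1:ℕ)):ℝ)/(n:ℝ)) / (2:ℝ) ^ (((i:ℕ):ℝ)/(n:ℝ)))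
          = ((n:ℝ) - 1) * (2:ℝ) ^ ((n:ℝ)⁻¹) := by
        rw [← hsum]
        apply sum_congr rfl
        intro i _
        push_cast
        ring_nf
      show (∑ i ∈ range (n - 1),
            (2:ℝ) ^ ((((i+1:ℕ)):ℝ)/(n:ℝ)) / (2:ℝ) ^ (((i:ℕ):ℝ)/(n:ℝ)))
          + 2 * (2:ℝ) ^ (((0:ℕ):ℝ)/(n:ℝ)) / (2:ℝ) ^ ((((n-1:ℕ)):ℝ)/(n:ℝ)) - n = _
      rw [key, Nat.cast_zero, hcast, hlastval]
      ring
end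

section
/- If a task set of n tasks with positive utilizations u_1, ..., u_n satisfies ∏_{i=1}^n (u_i + 1) ≤ 2 (the hyperbolic bound), then Σ_{i=1}^n u_i ≤ n·(2^{1/n} − 1) need not hold, but conversely Σ u_i ≤ n·(2^{1/n} − 1) implies ∏ (u_i + 1) ≤ 2. -/
/-- The hyperbolic bound `∏(u_i+1) ≤ 2` does not imply the Liu–Layland condition
`Σ u_i ≤ n (2^{1/n} − 1)`, but the converse implication holds. -/
theorem hyperbolic_vs_liu_layland :
    (∃ (n : ℕ) (u : Fin n → ℝ), 1 ≤ n ∧ (∀ i, 0 < u i) ∧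
      (∏ i, (u i + 1)) ≤ 2 ∧
      ¬ (∑ i, u i ≤ (n : ℝ) * ((2 : ℝ) ^ ((n : ℝ)⁻¹) - 1))) ∧
    (∀ (n : ℕ) (u : Fin n → ℝ), 1 ≤ n → (∀ i, 0 < u i) →
      ∑ i, u i ≤ (n : ℝ) * ((2 : ℝ) ^ ((n : ℝ)⁻¹) - 1) →
      (∏ i, (u i + 1)) ≤ 2) := by
  constructor
  · refine ⟨2, ![9/10, 1/19], by norm_num, ?_, ?_, ?_⟩
    · intro i; fin_cases i <;> norm_num
    · simp [Fin.prod_univ_two]; norm_num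
    · simp only [Fin.sum_univ_two]
      push_neg
      have h2 : ((2:ℕ):ℝ) = 2 := by norm_num
      rw [h2]
      have hlt : (2:ℝ) ^ ((2:ℝ)⁻¹) < 1.415 := by
        rw [show (2:ℝ)⁻¹ = (1:ℝ)/2 by norm_num]
        have : ((2:ℝ) ^ ((1:ℝ)/2)) ^ (2:ℕ) < (1.415:ℝ) ^ (2:ℕ) := by
          rw [← Real.rpow_natCast ((2:ℝ) ^ ((1:ℝ)/2)) 2, ← Real.rpow_mul (by norm_num)]
          norm_num
        have hpos : (0:ℝ) ≤ 2 ^ ((1:ℝ)/2) := (Real.rpow_pos_of_pos (by norm_num) _).le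
        nlinarith [Real.rpow_pos_of_pos (show (0:ℝ)<2 by norm_num) ((1:ℝ)/2)]
      have : ![(9:ℝ)/10, 1/19] 0 + ![(9:ℝ)/10, 1/19] 1 = 9/10 + 1/19 := rfl
      rw [this]
      nlinarith
  · intro n u hn hu hsum
    set s : Finset (Fin n) := Finset.univ
    have hnpos : (0:ℝ) < n := by exact_mod_cast hn
    have hw : ∀ i ∈ s, (0:ℝ) ≤ (n:ℝ)⁻¹ := fun i _ => by positivity
    have hw' : ∑ _i ∈ s, (n:ℝ)⁻¹ = 1 := by
      simp only [Finset.sum_const, nsmul_eq_mul, s, Finset.card_univ, Fintype.card_fin]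
      field_simp
    have hz : ∀ i ∈ s, (0:ℝ) ≤ u i + 1 := fun i _ => by linarith [(hu i).le]
    have key := Real.geom_mean_le_arith_mean_weighted s (fun _ => (n:ℝ)⁻¹)
      (fun i => u i + 1) hw hw' hz
    have hprod_pos : (0:ℝ) < ∏ i, (u i + 1) :=
      Finset.prod_pos fun i _ => by linarith [hu i]
    have hrw : ∏ i ∈ s, (u i + 1) ^ ((n:ℝ)⁻¹) = (∏ i, (u i + 1)) ^ ((n:ℝ)⁻¹) := by
      rw [← Real.finset_prod_rpow s _ hz]
    have hsum2 : ∑ i ∈ s, (n:ℝ)⁻¹ * (u i + 1) = (n:ℝ)⁻¹ * (∑ i, u i) + 1 := by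
      rw [← Finset.mul_sum, Finset.sum_add_distrib, mul_add]
      simp only [Finset.sum_const, nsmul_eq_mul, s, Finset.card_univ, Fintype.card_fin]
      rw [mul_one, inv_mul_cancel₀ (ne_of_gt hnpos)]
    have hle : (∏ i, (u i + 1)) ^ ((n:ℝ)⁻¹) ≤ (2:ℝ) ^ ((n:ℝ)⁻¹) := by
      rw [← hrw]
      refine key.trans ?_
      rw [hsum2]
      have : (n:ℝ)⁻¹ * (∑ i, u i) ≤ (2:ℝ) ^ ((n:ℝ)⁻¹) - 1 := by
        rw [inv_mul_le_iff₀ hnpos]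
        exact hsum
      linarith
    have := Real.rpow_le_rpow (Real.rpow_nonneg hprod_pos.le _) hle
      (le_of_lt hnpos)
    rw [← Real.rpow_mul hprod_pos.le, ← Real.rpow_mul (by norm_num),
      inv_mul_cancel₀ (ne_of_gt hnpos), Real.rpow_one, Real.rpow_one] at this
    simpa [s] using this
end

section
/- Margulis–Russo lemma: for a monotone property W ⊆ {0,1}^N, d/dp μ_p(W) = Σ_{i=1}^N I_i(p), where I_i(p) = μ_p({x : x with i-th bit set to 1 is in W and x with i-th bit set to 0 is not in W}) is the influence of coordinate i. -/
open Finset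
open scoped Classical

/-- Number of ones (Hamming weight) of an `N`-bit vector. -/
noncomputable def hamming {N : ℕ} (x : Fin N → Bool) : ℕ :=
  (Finset.univ.filter (fun i => x i = true)).card

/-- `μ_p(W) = Σ_{x ∈ W} p^{|x|} (1−p)^{N−|x|}`, the Bernoulli(p)-product
measure of `W ⊆ {0,1}^N`. -/
noncomputable def bmeasure {N : ℕ} (W : Finset (Fin N → Bool)) (p : ℝ) : ℝ :=
  ∑ x ∈ W, p ^ hamming x * (1 - p) ^ (N - hamming x)

/-- Influence of coordinate `i`: the Bernoulli(p) measure of the set of `x`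
for which `i` is pivotal. -/
noncomputable def influence {N : ℕ} (W : Finset (Fin N → Bool)) (i : Fin N) (p : ℝ) : ℝ :=
  bmeasure ((Finset.univ : Finset (Fin N → Bool)).filter
    (fun x => Function.update x i true ∈ W ∧ Function.update x i false ∉ W)) p

lemma update_false_self {N : ℕ} {x : Fin N → Bool} {i : Fin N} (h : x i = false) :
    Function.update x i false = x := by
  conv_lhs => rw [← h]
  exact Function.update_eq_self i x

lemma update_true_self {N : ℕ} {x : Fin N → Bool} {i : Fin N} (h : x i = true) :
    Function.update x i true = x := by
  conv_lhs => rw [← h]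
  exact Function.update_eq_self i x

lemma hamming_update_true {N : ℕ} {x : Fin N → Bool} {i : Fin N} (h : x i = false) :
    hamming (Function.update x i true) = hamming x + 1 := by
  unfold hamming
  have hset : (univ.filter fun j => Function.update x i true j = true)
      = insert i (univ.filter fun j => x j = true) := by
    ext j
    by_cases hj : j = i
    · subst hj; simp [h]
    · simp [Function.update_of_ne hj, hj]
  rw [hset, card_insert_of_notMem (by simp [h])]

lemma hamming_lt {N : ℕ} {x : Fin N → Bool} {i : Fin N} (h : x i = false) :
    hamming x < N := by
  have hss : (univ.filter fun j => x j = true) ⊂ univ :=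
    Finset.filter_ssubset.mpr ⟨i, mem_univ i, by simp [h]⟩
  have := Finset.card_lt_card hss
  simpa [hamming, Finset.card_univ] using this

lemma hamming_le {N : ℕ} (x : Fin N → Bool) : hamming x ≤ N := by
  have := Finset.card_filter_le (univ : Finset (Fin N)) (fun j => x j = true)
  simpa [hamming, Finset.card_univ] using this

/-- Margulis–Russo lemma: `d/dp μ_p(W) = Σ_i I_i(p)` for monotone `W`. -/
theorem margulis_russo {N : ℕ} (W : Finset (Fin N → Bool))
    (hmono : ∀ x ∈ W, ∀ y : Fin N → Bool, (∀ i, x i = true → y i = true) → y ∈ W)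
    (p : ℝ) :
    HasDerivAt (bmeasure W) (∑ i : Fin N, influence W i p) p := by
  classical
  -- the raw derivative
  have hderiv : HasDerivAt (bmeasure W)
      (∑ x ∈ W, ((hamming x : ℝ) * p ^ (hamming x - 1) * (1 - p) ^ (N - hamming x)
        - ((N - hamming x : ℕ) : ℝ) * p ^ hamming x * (1 - p) ^ (N - hamming x - 1))) p := by
    have hfun : bmeasure W = fun q : ℝ => ∑ x ∈ W, q ^ hamming x * (1 - q) ^ (N - hamming x) :=
      rfl
    rw [hfun]
    apply HasDerivAt.fun_sum
    intro x _
    have h1 : HasDerivAt (fun q : ℝ => q ^ hamming x)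
        ((hamming x : ℝ) * p ^ (hamming x - 1)) p := hasDerivAt_pow _ p
    have h2 : HasDerivAt (fun q : ℝ => (1 - q) ^ (N - hamming x))
        (((N - hamming x : ℕ) : ℝ) * (1 - p) ^ (N - hamming x - 1) * (-1)) p := by
      have h3 : HasDerivAt (fun q : ℝ => 1 - q) (-1) p := by
        simpa using (hasDerivAt_id p).const_sub 1
      exact (hasDerivAt_pow (N - hamming x) (1 - p)).comp p h3
    have := h1.fun_mul h2
    exact this.congr_deriv (by ring)
  convert hderiv using 1
  -- abbreviations
  set C : (Fin N → Bool) → ℝ := fun y => p ^ hamming y * (1 - p) ^ (N - hamming y - 1) with hC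
  -- rewrite each term of the RHS as a sum over coordinates
  have hterm : ∀ x : Fin N → Bool,
      ((hamming x : ℝ) * p ^ (hamming x - 1) * (1 - p) ^ (N - hamming x)
        - ((N - hamming x : ℕ) : ℝ) * p ^ hamming x * (1 - p) ^ (N - hamming x - 1))
      = ∑ i : Fin N, (if x i = true
          then p ^ (hamming x - 1) * (1 - p) ^ (N - hamming x)
          else -(p ^ hamming x * (1 - p) ^ (N - hamming x - 1))) := by
    intro x
    rw [Finset.sum_ite, Finset.sum_const, Finset.sum_const]
    have hcard1 : (univ.filter fun i => x i = true).card = hamming x := rfl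
    have hcard2 : (univ.filter fun i => ¬ x i = true).card = N - hamming x := by
      have := Finset.card_filter_add_card_filter_not
        (s := (univ : Finset (Fin N))) (p := fun i => x i = true)
      simp only [Finset.card_univ, Fintype.card_fin] at this
      omega
    rw [hcard1, hcard2]
    ring
  rw [Finset.sum_congr rfl (fun x _ => hterm x), Finset.sum_comm]
  refine Finset.sum_congr rfl (fun i _ => ?_)
  -- split the inner sum
  rw [Finset.sum_ite, Finset.sum_neg_distrib]
  -- claim 1: the "x i = true" part
  have claim1 : ∑ x ∈ W.filter (fun x => x i = true),
      p ^ (hamming x - 1) * (1 - p) ^ (N - hamming x)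
      = ∑ y ∈ univ.filter (fun y => y i = false ∧ Function.update y i true ∈ W), C y := by
    refine (Finset.sum_bij' (fun y _ => Function.update y i true)
        (fun x _ => Function.update x i false) ?_ ?_ ?_ ?_ ?_).symm
    · intro y hy
      simp only [mem_filter, mem_univ, true_and] at hy
      simp only [mem_filter]
      exact ⟨hy.2, Function.update_self i true y⟩
    · intro x hx
      simp only [mem_filter] at hx
      simp only [mem_filter, mem_univ, true_and]
      refine ⟨Function.update_self i false x, ?_⟩
      rw [Function.update_idem, update_true_self hx.2]
      exact hx.1
    · intro y hy
      simp only [mem_filter, mem_univ, true_and] at hy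
      simp only [Function.update_idem]
      exact update_false_self hy.1
    · intro x hx
      simp only [mem_filter] at hx
      simp only [Function.update_idem]
      exact update_true_self hx.2
    · intro y hy
      simp only [mem_filter, mem_univ, true_and] at hy
      simp only [hamming_update_true hy.1]
      simp [hC, Nat.succ_sub_one, Nat.sub_sub]
  -- claim 2: the "x i = false" part
  have claim2 : ∑ x ∈ W.filter (fun x => ¬ x i = true),
      p ^ hamming x * (1 - p) ^ (N - hamming x - 1)
      = ∑ y ∈ univ.filter (fun y => y i = false ∧ y ∈ W), C y := by
    refine Finset.sum_congr ?_ (fun x _ => rfl)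
    ext x
    simp [mem_filter, and_comm, Bool.not_eq_true]
  -- claim 3: influence equals sum over pivotal points with i-th bit false
  have claim3 : influence W i p
      = ∑ y ∈ univ.filter (fun y => y i = false ∧
          Function.update y i true ∈ W ∧ Function.update y i false ∉ W), C y := by
    set P := (univ : Finset (Fin N → Bool)).filter
      (fun x => Function.update x i true ∈ W ∧ Function.update x i false ∉ W) with hP
    have hsplit := Finset.sum_filter_add_sum_filter_not P (fun x => x i = false)
      (fun x => p ^ hamming x * (1 - p) ^ (N - hamming x))
    have hbij : ∑ x ∈ P.filter (fun x => ¬ x i = false),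
        p ^ hamming x * (1 - p) ^ (N - hamming x)
        = ∑ y ∈ P.filter (fun x => x i = false), p * C y := by
      refine (Finset.sum_bij' (fun y _ => Function.update y i true)
          (fun x _ => Function.update x i false) ?_ ?_ ?_ ?_ ?_).symm
      · intro y hy
        simp only [hP, mem_filter, mem_univ, true_and] at hy
        simp only [hP, mem_filter, mem_univ, true_and, Function.update_idem,
          Function.update_self]
        exact ⟨⟨hy.1.1, hy.1.2⟩, by simp⟩
      · intro x hx
        simp only [hP, mem_filter, mem_univ, true_and] at hx
        simp only [hP, mem_filter, mem_univ, true_and]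
        exact ⟨⟨by rw [Function.update_idem]; exact hx.1.1,
          by rw [Function.update_idem]; exact hx.1.2⟩,
          Function.update_self i false x⟩
      · intro y hy
        simp only [hP, mem_filter, mem_univ, true_and] at hy
        simp only [Function.update_idem]
        exact update_false_self hy.2
      · intro x hx
        simp only [hP, mem_filter, mem_univ, true_and] at hx
        simp only [Function.update_idem]
        exact update_true_self (by simpa using hx.2)
      · intro y hy
        simp only [hP, mem_filter, mem_univ, true_and] at hy
        simp only [hamming_update_true hy.2]
        have h1 : N - (hamming y + 1) = N - hamming y - 1 := by omega
        rw [h1, pow_succ]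
        simp only [hC]
        ring
    have hfalse : ∑ x ∈ P.filter (fun x => x i = false),
        p ^ hamming x * (1 - p) ^ (N - hamming x)
        = ∑ y ∈ P.filter (fun x => x i = false), (1 - p) * C y := by
      refine Finset.sum_congr rfl (fun y hy => ?_)
      simp only [hP, mem_filter, mem_univ, true_and] at hy
      have hlt : hamming y < N := hamming_lt hy.2
      have h1 : N - hamming y = (N - hamming y - 1) + 1 := by omega
      rw [h1, pow_succ]
      simp only [hC]
      ring
    have hinf : influence W i p = ∑ x ∈ P, p ^ hamming x * (1 - p) ^ (N - hamming x) := rfl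
    rw [hinf, ← hsplit, hbij, hfalse, ← Finset.sum_add_distrib]
    refine Finset.sum_congr ?_ (fun y _ => by ring)
    ext y
    simp only [hP, mem_filter, mem_univ, true_and]
    tauto
  rw [claim1, claim2, claim3, ← sub_eq_add_neg]
  -- final step: subset argument using monotonicity
  have hsub : univ.filter (fun y => y i = false ∧ y ∈ W)
      ⊆ univ.filter (fun y => y i = false ∧ Function.update y i true ∈ W) := by
    intro y hy
    simp only [mem_filter, mem_univ, true_and] at hy ⊢
    refine ⟨hy.1, hmono y hy.2 _ (fun j hj => ?_)⟩
    by_cases hji : j = i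
    · subst hji; simp
    · rw [Function.update_of_ne hji]; exact hj
  rw [← Finset.sum_sdiff_eq_sub hsub]
  refine (Finset.sum_congr ?_ (fun x _ => rfl)).symm
  ext y
  simp only [mem_sdiff, mem_filter, mem_univ, true_and]
  constructor
  · rintro ⟨⟨hyi, hup⟩, hnot⟩
    refine ⟨hyi, hup, ?_⟩
    rw [update_false_self hyi]
    exact fun hyW => hnot ⟨hyi, hyW⟩
  · rintro ⟨hyi, hup, hdown⟩
    refine ⟨⟨hyi, hup⟩, ?_⟩
    intro hmem
    exact hdown (by rw [update_false_self hyi]; exact hmem.2)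
end

section
/- For a task τ_n with period P_n scheduled with fixed priorities among higher-priority tasks τ_1,...,τ_{n−1} (periods P_i, execution times c_i > 0), synchronously released at 0: if there exists t with 0 < t ≤ P_n and c_n + Σ_{i=1}^{n-1} ⌈t/P_i⌉·c_i ≤ t, then the least fixed point L of the map t ↦ c_n + Σ_{i<n} ⌈t/P_i⌉·c_i satisfies L ≤ P_n; moreover the iteration t_0 = c_n + Σ c_i, t_{k+1} = c_n + Σ ⌈t_k/P_i⌉ c_i is monotone nondecreasing and converges to this least fixed point. -/
/-- A monotone integer sequence bounded above is eventually constant. -/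
lemma mono_int_stab (f : ℕ → ℤ) (hf : Monotone f) (B : ℤ) (hB : ∀ n, f n ≤ B) :
    ∃ K, ∀ k, K ≤ k → f k = f K := by
  obtain ⟨M, ⟨K, hK⟩, hMub⟩ :=
    Int.exists_greatest_of_bdd (P := fun z => ∃ n, f n = z)
      ⟨B, fun z ⟨n, hn⟩ => hn ▸ hB n⟩ ⟨f 0, 0, rfl⟩
  exact ⟨K, fun k hk => le_antisymm (hK ▸ hMub (f k) ⟨k, rfl⟩) (hf hk)⟩

/-- Fixed-point response-time analysis: if the time-demand condition holds for
task `τ_n`, the least (positive) fixed point `L` of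
`t ↦ c_n + Σ_{i<n} ⌈t/P_i⌉ c_i` satisfies `L ≤ P_n`, and the standard iteration
starting from `t₀ = c_n + Σ c_i` is monotone nondecreasing and converges to `L`. -/
theorem response_time_fixed_point
    (m : ℕ) (c P : Fin m → ℝ) (cn Pn : ℝ)
    (hc : ∀ i, 0 < c i) (hP : ∀ i, 0 < P i) (hcn : 0 < cn) (hPn : 0 < Pn)
    (F : ℝ → ℝ) (hF : ∀ t, F t = cn + ∑ i, (⌈t / P i⌉ : ℝ) * c i)
    (hex : ∃ t, 0 < t ∧ t ≤ Pn ∧ F t ≤ t)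
    (seq : ℕ → ℝ) (hseq0 : seq 0 = cn + ∑ i, c i)
    (hseqS : ∀ k, seq (k + 1) = F (seq k)) :
    ∃ L, IsLeast {t : ℝ | 0 < t ∧ F t = t} L ∧ L ≤ Pn ∧
      Monotone seq ∧ Filter.Tendsto seq Filter.atTop (nhds L) := by
  obtain ⟨t0, ht0pos, ht0Pn, ht0fix⟩ := hex
  -- F is monotone
  have monoF : Monotone F := by
    intro a b hab
    rw [hF, hF]
    apply add_le_add le_rfl
    apply Finset.sum_le_sum
    intro i _
    apply mul_le_mul_of_nonneg_right _ (hc i).le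
    exact_mod_cast Int.ceil_le_ceil (by gcongr; exact (hP i).le)
  -- base bound: for t > 0, seq 0 ≤ F t
  have base : ∀ t, 0 < t → cn + ∑ i, c i ≤ F t := by
    intro t ht
    rw [hF]
    gcongr with i _
    have h1 : (1 : ℝ) ≤ (⌈t / P i⌉ : ℝ) := by
      exact_mod_cast Int.ceil_pos.mpr (div_pos ht (hP i))
    nlinarith [hc i]
  have hpos0 : 0 < seq 0 := by
    rw [hseq0]
    exact add_pos_of_pos_of_nonneg hcn (Finset.sum_nonneg fun i _ => (hc i).le)
  -- monotone and positive
  have key : ∀ k, 0 < seq k ∧ seq k ≤ seq (k + 1) := by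
    intro k
    induction k with
    | zero =>
        refine ⟨hpos0, ?_⟩
        rw [hseqS, ← hseq0] at *
        exact hseq0 ▸ (hseq0 ▸ base (seq 0) hpos0)
    | succ n ih =>
        constructor
        · calc (0:ℝ) < seq n := ih.1
            _ ≤ seq (n+1) := ih.2
        · rw [hseqS, hseqS]
          exact monoF ih.2
  have monoseq : Monotone seq := monotone_nat_of_le_succ fun k => (key k).2
  -- upper bound by t0
  have hub : ∀ k, seq k ≤ t0 := by
    intro k
    induction k with
    | zero => rw [hseq0]; exact le_trans (base t0 ht0pos) ht0fix
    | succ n ih => rw [hseqS]; exact le_trans (monoF ih) ht0fix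
  -- ceilings stabilize
  have hstab : ∀ i : Fin m, ∃ K, ∀ k, K ≤ k → ⌈seq k / P i⌉ = ⌈seq K / P i⌉ := by
    intro i
    apply mono_int_stab (fun k => ⌈seq k / P i⌉)
      (fun a b hab => Int.ceil_le_ceil (by gcongr; exacts [(hP i).le, monoseq hab]))
      ⌈t0 / P i⌉
    exact fun n => Int.ceil_le_ceil (by gcongr; exacts [(hP i).le, hub n])
  choose N hN using hstab
  set K := Finset.univ.sup N with hK
  have hNK : ∀ i : Fin m, N i ≤ K := fun i => Finset.le_sup (Finset.mem_univ i)
  have hceilK : ∀ k, K ≤ k → ∀ i, ⌈seq k / P i⌉ = ⌈seq K / P i⌉ := by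
    intro k hk i
    rw [hN i k (le_trans (hNK i) hk), hN i K (hNK i)]
  have hconst : ∀ k, K ≤ k → seq (k + 1) = seq (K + 1) := by
    intro k hk
    rw [hseqS, hseqS, hF, hF]
    congr 1
    exact Finset.sum_congr rfl fun i _ => by rw [hceilK k hk i]
  set L := seq (K + 1) with hL
  have hfix : F L = L := by
    have h1 : seq (K + 2) = L := hconst (K + 1) (Nat.le_succ K)
    exact (hseqS (K + 1)).symm.trans h1
  have hLpos : 0 < L := lt_of_lt_of_le hpos0 (monoseq (Nat.zero_le _))
  refine ⟨L, ⟨⟨hLpos, hfix⟩, ?_⟩, le_trans (hub (K + 1)) ht0Pn, monoseq, ?_⟩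
  · -- least
    rintro t ⟨htpos, htfix⟩
    have : ∀ k, seq k ≤ t := by
      intro k
      induction k with
      | zero => rw [hseq0]; exact le_trans (base t htpos) htfix.le
      | succ n ih => rw [hseqS]; exact le_trans (monoF ih) htfix.le
    exact this (K + 1)
  · -- convergence
    apply tendsto_atTop_of_eventually_const (i₀ := K + 1)
    intro k hk
    obtain ⟨j, rfl⟩ := Nat.exists_eq_add_of_le hk
    induction j with
    | zero => rfl
    | succ n ih =>
        have : K + 1 + (n + 1) = (K + 1 + n) + 1 := by ring
        rw [this]
        exact hconst (K + 1 + n) (by omega)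
end
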